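/- The best-response update of the coevolutionary action–opinion coordination game is monotone with respect to the componentwise partial order: fix a player i with parameters γ ≥ 0, β > 0, λ > 0, and define from a state (x, y) ∈ {−1,+1}ⁿ × [−1,1]ⁿ the discriminant δ_i(x,y) = γ∑_j a_{ij}x_j + (2βλ/(β+λ))∑_j w_{ij}y_j, the updated action x_i⁺ = +1 if δ_i(x,y) > 0, x_i⁺ = −1 if δ_i(x,y) < 0, and x_i⁺ = x_i if δ_i(x,y) = 0, and the updated opinion y_i⁺ = (β∑_j w_{ij}y_j + λ x_i⁺)/(β+λ). If (x, y) and (x', y') are two states with x_j ≤ x'_j and y_j ≤ y'_j for every j, then the updates satisfy x_i⁺ ≤ x'_i⁺ and y_i⁺ ≤ y'_i⁺. -/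
import Mathlib


open Finset

/-- The discriminant `δ_i(x,y) = γ ∑_j a_{ij} x_j + (2βλ/(β+λ)) ∑_j w_{ij} y_j`
of player `i` in the coevolutionary action–opinion coordination game. -/
noncomputable def coevDelta (n : ℕ) (A W : Fin n → Fin n → ℝ)
    (γ β lam : ℝ) (i : Fin n) (x y : Fin n → ℝ) : ℝ :=
  γ * ∑ j, A i j * x j + 2 * β * lam / (β + lam) * ∑ j, W i j * y j

/-- The best-response action update of player `i`: `+1` if `δ_i(x,y) > 0`, `-1` if
`δ_i(x,y) < 0`, and the current action `x_i` if `δ_i(x,y) = 0`. -/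
noncomputable def coevNewAction (n : ℕ) (A W : Fin n → Fin n → ℝ)
    (γ β lam : ℝ) (i : Fin n) (x y : Fin n → ℝ) : ℝ :=
  if 0 < coevDelta n A W γ β lam i x y then 1
  else if coevDelta n A W γ β lam i x y < 0 then -1
  else x i

/-- The best-response opinion update of player `i`:
`y_i⁺ = (β ∑_j w_{ij} y_j + λ x_i⁺)/(β+λ)`. -/
noncomputable def coevNewOpinion (n : ℕ) (A W : Fin n → Fin n → ℝ)
    (γ β lam : ℝ) (i : Fin n) (x y : Fin n → ℝ) : ℝ :=
  (β * ∑ j, W i j * y j + lam * coevNewAction n A W γ β lam i x y) / (β + lam)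

/-- The best-response update of the coevolutionary action–opinion
coordination game is monotone with respect to the componentwise partial order: if
`x_j ≤ x'_j` and `y_j ≤ y'_j` for every `j`, then the updated action and opinion of
player `i` satisfy `x_i⁺ ≤ x'_i⁺` and `y_i⁺ ≤ y'_i⁺`. -/
theorem coev_best_response_monotone
    (n : ℕ) (A W : Fin n → Fin n → ℝ)
    (hA : ∀ i j, 0 ≤ A i j) (hAdiag : ∀ i, A i i = 0) (hArow : ∀ i, ∑ j, A i j = 1)
    (hW : ∀ i j, 0 ≤ W i j) (hWdiag : ∀ i, W i i = 0) (hWrow : ∀ i, ∑ j, W i j = 1)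
    (γ β lam : ℝ) (hγ : 0 ≤ γ) (hβ : 0 < β) (hlam : 0 < lam)
    (i : Fin n) (x x' y y' : Fin n → ℝ)
    (hx : ∀ j, x j = -1 ∨ x j = 1) (hx' : ∀ j, x' j = -1 ∨ x' j = 1)
    (hy : ∀ j, y j ∈ Set.Icc (-1 : ℝ) 1) (hy' : ∀ j, y' j ∈ Set.Icc (-1 : ℝ) 1)
    (hxx : ∀ j, x j ≤ x' j) (hyy : ∀ j, y j ≤ y' j) :
    coevNewAction n A W γ β lam i x y ≤ coevNewAction n A W γ β lam i x' y' ∧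
    coevNewOpinion n A W γ β lam i x y ≤ coevNewOpinion n A W γ β lam i x' y' := by

  have hsumW : ∑ j, W i j * y j ≤ ∑ j, W i j * y' j :=
    Finset.sum_le_sum fun j _ => mul_le_mul_of_nonneg_left (hyy j) (hW i j)
  have hsumA : ∑ j, A i j * x j ≤ ∑ j, A i j * x' j :=
    Finset.sum_le_sum fun j _ => mul_le_mul_of_nonneg_left (hxx j) (hA i j)
  have hcoef : 0 ≤ 2 * β * lam / (β + lam) := by positivity
  have hδ : coevDelta n A W γ β lam i x y ≤ coevDelta n A W γ β lam i x' y' := by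
    unfold coevDelta
    exact add_le_add (mul_le_mul_of_nonneg_left hsumA hγ)
      (mul_le_mul_of_nonneg_left hsumW hcoef)
  have hact : coevNewAction n A W γ β lam i x y ≤ coevNewAction n A W γ β lam i x' y' := by
    have hxi1 : x i ≤ 1 := by rcases hx i with h | h <;> simp [h]
    have hxi2 : (-1 : ℝ) ≤ x' i := by rcases hx' i with h | h <;> simp [h]
    unfold coevNewAction
    split_ifs with a b c d <;> first | rfl | linarith | exact hxx i
  refine ⟨hact, ?_⟩
  unfold coevNewOpinion
  apply div_le_div_of_nonneg_right _ (by linarith)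
  exact add_le_add (mul_le_mul_of_nonneg_left hsumW hβ.le)
    (mul_le_mul_of_nonneg_left hact hlam.le)
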